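/- Let (V, ω) be a finite-dimensional symplectic vector space over a field of characteristic zero, and let U = T(V)/(R) be the Weyl algebra, where R = span{x⊗y − y⊗x − ω(x,y) : x,y ∈ V}. Then R is of PBW type: the canonical graded surjection Sym(V) → gr(U) from the symmetric algebra to the associated graded of U (with respect to the filtration by tensor degree) is an isomorphism of graded algebras. -/

import Mathlib

/-!
STATEMENT 3: Let `(V, ω)` be a finite-dimensional symplectic vector space over a field of
characteristic zero and `U = T(V)/(R)` the Weyl algebra, where
`R = span{x⊗y − y⊗x − ω(x,y)}`.  Then `R` is of PBW type: the canonical graded surjection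
`Sym(V) → gr(U)` (from the symmetric algebra to the associated graded of `U` for the
filtration by tensor degree) is an isomorphism of graded algebras.

We realise `Sym(V)` and `U` as `RingQuot`s of the tensor algebra; the filtration `F_p` on
`U` is spanned by products of at most `p` generators, and the degree-`p` part of `Sym(V)`
is spanned by products of exactly `p` generators.  The canonical graded map, determined on
generators by `v₁⋯v_p ↦ [v₁⋯v_p]`, is asserted (degreewise) to exist and be bijective;
multiplicativity of the canonical map is automatic from this description on generators.
-/

noncomputable section

variable (𝕂 : Type) [Field 𝕂] [CharZero 𝕂]
variable (V : Type) [AddCommGroup V] [Module 𝕂 V] [FiniteDimensional 𝕂 V]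
variable (ω : V →ₗ[𝕂] V →ₗ[𝕂] 𝕂)

/-- The Weyl relations `x⊗y − y⊗x ~ ω(x,y)`. -/
def weylRel : TensorAlgebra 𝕂 V → TensorAlgebra 𝕂 V → Prop := fun a b =>
  ∃ x y : V, a = TensorAlgebra.ι 𝕂 x * TensorAlgebra.ι 𝕂 y
      - TensorAlgebra.ι 𝕂 y * TensorAlgebra.ι 𝕂 x ∧
    b = algebraMap 𝕂 (TensorAlgebra 𝕂 V) (ω x y)

/-- The Weyl algebra `U = T(V)/(R)`. -/
abbrev Weyl := RingQuot (weylRel 𝕂 V ω)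

/-- The symmetric-algebra relations `x⊗y ~ y⊗x`. -/
def symRel : TensorAlgebra 𝕂 V → TensorAlgebra 𝕂 V → Prop := fun a b =>
  ∃ x y : V, a = TensorAlgebra.ι 𝕂 x * TensorAlgebra.ι 𝕂 y ∧
    b = TensorAlgebra.ι 𝕂 y * TensorAlgebra.ι 𝕂 x

/-- The symmetric algebra `Sym(V) = T(V)/(Q)`. -/
abbrev SymA := RingQuot (symRel 𝕂 V)

/-- Generators of the Weyl algebra. -/
def ιW : V →ₗ[𝕂] Weyl 𝕂 V ω :=
  (RingQuot.mkAlgHom 𝕂 (weylRel 𝕂 V ω)).toLinearMap.comp (TensorAlgebra.ι 𝕂)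

/-- Generators of the symmetric algebra. -/
def ιS : V →ₗ[𝕂] SymA 𝕂 V :=
  (RingQuot.mkAlgHom 𝕂 (symRel 𝕂 V)).toLinearMap.comp (TensorAlgebra.ι 𝕂)

/-- The filtration of `U` by tensor degree: `F_p` is spanned by products of at most `p`
generators. -/
def FW (p : ℕ) : Submodule 𝕂 (Weyl 𝕂 V ω) :=
  Submodule.span 𝕂 {w | ∃ l : List V, l.length ≤ p ∧ w = (l.map (ιW 𝕂 V ω)).prod}

/-- `F_{p-1}` (with `F_{-1} = 0`). -/
def FWprev : ℕ → Submodule 𝕂 (Weyl 𝕂 V ω)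
  | 0 => ⊥
  | (q + 1) => FW 𝕂 V ω q

/-- The `p`-th piece of the associated graded algebra `gr(U) = ⊕ F_p/F_{p-1}`. -/
abbrev GrW (p : ℕ) : Type :=
  @HasQuotient.Quotient _ _ (@Submodule.hasQuotient 𝕂 _ _ (Submodule.addCommGroup (FW 𝕂 V ω p)) _)
    ((FWprev 𝕂 V ω p).comap (FW 𝕂 V ω p).subtype)

/-- The degree-`p` part of `Sym(V)`. -/
def SymGr (p : ℕ) : Submodule 𝕂 (SymA 𝕂 V) :=
  Submodule.span 𝕂 {w | ∃ l : List V, l.length = p ∧ w = (l.map (ιS 𝕂 V)).prod}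

/-!
Choose a basis of `V`, so that `Sym(V)` becomes the polynomial ring `𝕂[x]`, and write `ω` as the
antisymmetrization `c x y - c y x` of a bilinear form `c` (in characteristic zero, `c = ω / 2`).
Letting `v ∈ V` act on `𝕂[x]` by multiplication by the linear polynomial `v` plus the constant
coefficient derivation `x_i ↦ c(v, b_i)` gives a representation of `U` (the Fock representation),
hence a symbol map `u ↦ u • 1`. It sends `F_p` to polynomials of degree `≤ p`, and a product of
`p` generators to their commutative product plus terms of lower degree, so the degree-`p` part of
the symbol is a left inverse of `Sym^p(V) → gr_p U`. That map is well defined because, by the Weyl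
relations, reordering a product of `p` generators changes it only by an element of `F_{p-1}`,
which lets normally ordered monomials lift `𝕂[x]` to `U`; it is onto since products of `p`
generators span `gr_p U`.
-/

open MvPolynomial

namespace Finsupp

variable {α : Type*}

theorem length_toList_toMultiset (m : α →₀ ℕ) : (toMultiset m).toList.length = m.degree := by
  rw [Multiset.length_toList, card_toMultiset]
  rfl

theorem toList_toMultiset_add_single_perm (m : α →₀ ℕ) (i : α) :
    (toMultiset (m + single i 1)).toList.Perm (i :: (toMultiset m).toList) := by
  rw [← Multiset.coe_eq_coe, ← Multiset.cons_coe, Multiset.coe_toList, Multiset.coe_toList,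
    map_add, toMultiset_single, one_nsmul, add_comm, Multiset.singleton_add]

end Finsupp

namespace MvPolynomial

variable {R σ : Type*} [CommSemiring R]

theorem restrictTotalDegree_mono {m n : ℕ} (h : m ≤ n) :
    restrictTotalDegree σ R m ≤ restrictTotalDegree σ R n :=
  restrictSupport_mono R fun _ hs => le_trans hs h

theorem restrictTotalDegree_le_iff {n : ℕ} {P : Submodule R (MvPolynomial σ R)} :
    restrictTotalDegree σ R n ≤ P ↔ ∀ s : σ →₀ ℕ, s.degree ≤ n → monomial s 1 ∈ P := by
  rw [restrictTotalDegree, restrictSupport_eq_span, Submodule.span_le, Set.image_subset_iff]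
  rfl

theorem mul_mem_restrictTotalDegree {p q : MvPolynomial σ R} {m n : ℕ}
    (hp : p ∈ restrictTotalDegree σ R m) (hq : q ∈ restrictTotalDegree σ R n) :
    p * q ∈ restrictTotalDegree σ R (m + n) := by
  rw [mem_restrictTotalDegree] at *
  exact (totalDegree_mul p q).trans (add_le_add hp hq)

theorem homogeneousSubmodule_le_restrictTotalDegree (n : ℕ) :
    homogeneousSubmodule σ R n ≤ restrictTotalDegree σ R n := fun p hp =>
  (mem_restrictTotalDegree _ _ p).mpr ((mem_homogeneousSubmodule n p).mp hp).totalDegree_le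

theorem homogeneousComponent_eq_zero_of_mem_restrictTotalDegree {p : MvPolynomial σ R} {m n : ℕ}
    (hp : p ∈ restrictTotalDegree σ R m) (hmn : m < n) : homogeneousComponent n p = 0 :=
  homogeneousComponent_eq_zero n p (((mem_restrictTotalDegree _ _ p).mp hp).trans_lt hmn)

theorem mkDerivation_C_mem_restrictTotalDegree (c : σ → R) {n : ℕ} {q : MvPolynomial σ R}
    (hq : q ∈ restrictTotalDegree σ R (n + 1)) :
    mkDerivation R (fun i => C (c i)) q ∈ restrictTotalDegree σ R n := by
  refine (restrictTotalDegree_le_iff (P := (restrictTotalDegree σ R n).comap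
    (mkDerivation R fun i => (C (c i) : MvPolynomial σ R)).toLinearMap)).mpr (fun s hs => ?_) hq
  rw [Submodule.mem_comap, Derivation.coeFn_coe, mkDerivation_monomial, one_smul]
  refine Submodule.finsuppSum_mem _ _ _ _ fun i hi => ?_
  rw [smul_eq_mul, mul_comm, C_mul_monomial, restrictTotalDegree, monomial_mem_restrictSupport]
  left
  have hle : Finsupp.single i 1 ≤ s := Finsupp.single_le_iff.mpr (Nat.one_le_iff_ne_zero.mpr hi)
  have hdeg := congrArg Finsupp.degree (tsub_add_cancel_of_le hle)
  rw [map_add, Finsupp.degree_single] at hdeg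
  change (s - Finsupp.single i 1).degree ≤ n
  omega

end MvPolynomial

section

variable {𝕂 V ω}
omit [CharZero 𝕂] [FiniteDimensional 𝕂 V]

section WeylFiltration

theorem ιW_mul_ιW_sub_ιW_mul_ιW (x y : V) :
    ιW 𝕂 V ω x * ιW 𝕂 V ω y - ιW 𝕂 V ω y * ιW 𝕂 V ω x = algebraMap 𝕂 (Weyl 𝕂 V ω) (ω x y) := by
  have h := RingQuot.mkAlgHom_rel 𝕂 (show weylRel 𝕂 V ω _ _ from ⟨x, y, rfl, rfl⟩)
  rw [map_sub, map_mul, map_mul, AlgHom.commutes] at h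
  exact h

theorem FW_mono {p q : ℕ} (h : p ≤ q) : FW 𝕂 V ω p ≤ FW 𝕂 V ω q :=
  Submodule.span_mono fun _ ⟨l, hl, hw⟩ => ⟨l, hl.trans h, hw⟩

theorem list_prod_mem_FW (l : List V) : (l.map (ιW 𝕂 V ω)).prod ∈ FW 𝕂 V ω l.length :=
  Submodule.subset_span ⟨l, le_rfl, rfl⟩

theorem list_prod_mem_FWprev {l : List V} {p : ℕ} (h : l.length < p) :
    (l.map (ιW 𝕂 V ω)).prod ∈ FWprev 𝕂 V ω p := by
  cases p with
  | zero => omega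
  | succ p => exact FW_mono (Nat.lt_succ_iff.mp h) (list_prod_mem_FW l)

theorem ιW_mul_mem_FW (v : V) {x : Weyl 𝕂 V ω} {p : ℕ} (hx : x ∈ FW 𝕂 V ω p) :
    ιW 𝕂 V ω v * x ∈ FW 𝕂 V ω (p + 1) := by
  induction hx using Submodule.span_induction with
  | mem _ h =>
    obtain ⟨l, hl, rfl⟩ := h
    exact Submodule.subset_span ⟨v :: l, by simpa using hl, by simp⟩
  | zero => rw [mul_zero]; exact zero_mem _
  | add x y _ _ hx hy => rw [mul_add]; exact add_mem hx hy
  | smul r x _ hx => rw [mul_smul_comm]; exact Submodule.smul_mem _ r hx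

theorem ιW_mul_mem_FW_of_mem_FWprev (v : V) {x : Weyl 𝕂 V ω} {p : ℕ}
    (hx : x ∈ FWprev 𝕂 V ω p) : ιW 𝕂 V ω v * x ∈ FW 𝕂 V ω p := by
  cases p with
  | zero => rw [(Submodule.mem_bot 𝕂).mp hx, mul_zero]; exact zero_mem _
  | succ p => exact ιW_mul_mem_FW v hx

theorem list_prod_ιW_sub_mem_FWprev_of_perm {l₁ l₂ : List V} (h : l₁.Perm l₂) :
    (l₁.map (ιW 𝕂 V ω)).prod - (l₂.map (ιW 𝕂 V ω)).prod ∈ FWprev 𝕂 V ω l₁.length := by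
  induction h with
  | nil => simp
  | cons v _ ih =>
    simp only [List.map_cons, List.prod_cons, ← mul_sub]
    exact ιW_mul_mem_FW_of_mem_FWprev v ih
  | swap x y t =>
    simp only [List.map_cons, List.prod_cons, ← mul_assoc, ← sub_mul,
      ιW_mul_ιW_sub_ιW_mul_ιW, ← Algebra.smul_def]
    exact Submodule.smul_mem _ _ (FW_mono t.length.le_succ (list_prod_mem_FW t))
  | trans h₁₂ _ ih₁₂ ih₂₃ =>
    rw [← h₁₂.length_eq] at ih₂₃
    simpa using add_mem ih₁₂ ih₂₃

end WeylFiltration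

section SymmetricAlgebra

theorem ιS_mul_ιS (x y : V) : ιS 𝕂 V x * ιS 𝕂 V y = ιS 𝕂 V y * ιS 𝕂 V x := by
  have h := RingQuot.mkAlgHom_rel 𝕂 (show symRel 𝕂 V _ _ from ⟨x, y, rfl, rfl⟩)
  rw [map_mul, map_mul] at h
  exact h

theorem adjoin_range_ιS : Algebra.adjoin 𝕂 (Set.range (ιS 𝕂 V)) = ⊤ := by
  rw [ιS, LinearMap.coe_comp, Set.range_comp, AlgHom.coe_toLinearMap, Algebra.adjoin_image,
    TensorAlgebra.adjoin_range_ι, Algebra.map_top, AlgHom.range_eq_top]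
  exact RingQuot.mkAlgHom_surjective 𝕂 _

theorem SymA.mul_comm (x y : SymA 𝕂 V) : x * y = y * x := by
  have mem (z : SymA 𝕂 V) : z ∈ Algebra.adjoin 𝕂 (Set.range (ιS 𝕂 V)) := by
    rw [adjoin_range_ιS]; trivial
  refine (Algebra.commute_of_mem_adjoin_of_forall_mem_commute (mem y) ?_).eq
  rintro _ ⟨w, rfl⟩
  refine (Algebra.commute_of_mem_adjoin_of_forall_mem_commute (mem x) ?_).symm
  rintro _ ⟨v, rfl⟩
  exact ιS_mul_ιS w v

instance : CommRing (SymA 𝕂 V) :=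
  { (inferInstance : Ring (SymA 𝕂 V)) with mul_comm := SymA.mul_comm }

end SymmetricAlgebra

variable {σ : Type*} (b : Module.Basis σ 𝕂 V)

section LinearPolynomials

def linearPoly : V →ₗ[𝕂] MvPolynomial σ 𝕂 := b.constr 𝕂 X

@[simp]
theorem linearPoly_basis (i : σ) : linearPoly b (b i) = X i := b.constr_basis 𝕂 X i

theorem linearPoly_mem_homogeneousSubmodule (v : V) :
    linearPoly b v ∈ homogeneousSubmodule σ 𝕂 1 := by
  have : (homogeneousSubmodule σ 𝕂 1).comap (linearPoly b) = ⊤ :=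
    (Submodule.eq_top_iff_forall_basis_mem b).mpr fun i => by simpa using isHomogeneous_X 𝕂 i
  exact this.ge trivial

theorem linearPoly_mem_restrictTotalDegree (v : V) :
    linearPoly b v ∈ restrictTotalDegree σ 𝕂 1 :=
  homogeneousSubmodule_le_restrictTotalDegree 1 (linearPoly_mem_homogeneousSubmodule b v)

theorem list_prod_linearPoly_mem_homogeneousSubmodule (l : List V) :
    (l.map (linearPoly b)).prod ∈ homogeneousSubmodule σ 𝕂 l.length := by
  simpa using SetLike.list_prod_map_mem_graded l (fun _ => 1) (linearPoly b)
    fun v _ => linearPoly_mem_homogeneousSubmodule b v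

end LinearPolynomials

section PolynomialModel

def symToPoly : SymA 𝕂 V →ₐ[𝕂] MvPolynomial σ 𝕂 :=
  RingQuot.liftAlgHom 𝕂 ⟨TensorAlgebra.lift 𝕂 (linearPoly b), by
    rintro _ _ ⟨x, y, rfl, rfl⟩
    simp only [map_mul, TensorAlgebra.lift_ι_apply]
    exact mul_comm _ _⟩

theorem symToPoly_ιS (v : V) : symToPoly b (ιS 𝕂 V v) = linearPoly b v := by
  rw [ιS, LinearMap.comp_apply, AlgHom.toLinearMap_apply, symToPoly,
    RingQuot.liftAlgHom_mkAlgHom_apply, TensorAlgebra.lift_ι_apply]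

theorem symToPoly_list_prod (l : List V) :
    symToPoly b (l.map (ιS 𝕂 V)).prod = (l.map (linearPoly b)).prod := by
  simp [map_list_prod, Function.comp_def, symToPoly_ιS]

theorem symToPoly_injective : Function.Injective (symToPoly b) := by
  have : (aeval fun i => ιS 𝕂 V (b i)).comp (symToPoly b) = AlgHom.id 𝕂 (SymA 𝕂 V) :=
    RingQuot.ringQuot_ext' 𝕂 _ _ <| TensorAlgebra.hom_ext <| b.ext fun i => by
      change aeval _ (symToPoly b (ιS 𝕂 V (b i))) = ιS 𝕂 V (b i)
      rw [symToPoly_ιS, linearPoly_basis, aeval_X]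
  exact Function.LeftInverse.injective (g := aeval fun i => ιS 𝕂 V (b i)) (DFunLike.congr_fun this)

theorem symToPoly_mem_homogeneousSubmodule {p : ℕ} {s : SymA 𝕂 V} (hs : s ∈ SymGr 𝕂 V p) :
    symToPoly b s ∈ homogeneousSubmodule σ 𝕂 p := by
  refine (Submodule.span_le
    (p := (homogeneousSubmodule σ 𝕂 p).comap (symToPoly b).toLinearMap)).mpr ?_ hs
  rintro _ ⟨l, rfl, rfl⟩
  rw [SetLike.mem_coe, Submodule.mem_comap, AlgHom.toLinearMap_apply, symToPoly_list_prod]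
  exact list_prod_linearPoly_mem_homogeneousSubmodule b l

end PolynomialModel

section FockOperators

variable (c : V →ₗ[𝕂] V →ₗ[𝕂] 𝕂)

def fockDeriv : V →ₗ[𝕂] Derivation 𝕂 (MvPolynomial σ 𝕂) (MvPolynomial σ 𝕂) :=
  (mkDerivationEquiv 𝕂).toLinearMap ∘ₗ
    LinearMap.pi fun i => Algebra.linearMap 𝕂 (MvPolynomial σ 𝕂) ∘ₗ c.flip (b i)

@[simp]
theorem fockDeriv_X (v : V) (i : σ) : fockDeriv b c v (X i) = C (c v (b i)) :=
  mkDerivation_X 𝕂 _ i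

theorem fockDeriv_linearPoly (x y : V) : fockDeriv b c x (linearPoly b y) = C (c x y) := by
  have : (fockDeriv b c x).toLinearMap ∘ₗ linearPoly b = Algebra.linearMap 𝕂 _ ∘ₗ c x :=
    b.ext fun i => by simp
  exact LinearMap.congr_fun this y

theorem fockDeriv_comm (x y : V) (q : MvPolynomial σ 𝕂) :
    fockDeriv b c x (fockDeriv b c y q) = fockDeriv b c y (fockDeriv b c x q) := by
  have : ⁅fockDeriv b c x, fockDeriv b c y⁆ = 0 :=
    derivation_ext fun i => by simp [Derivation.commutator_apply]
  simpa [Derivation.commutator_apply, sub_eq_zero] using DFunLike.congr_fun this q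

theorem fockDeriv_mem_restrictTotalDegree (v : V) {n : ℕ} {q : MvPolynomial σ 𝕂}
    (hq : q ∈ restrictTotalDegree σ 𝕂 (n + 1)) : fockDeriv b c v q ∈ restrictTotalDegree σ 𝕂 n :=
  mkDerivation_C_mem_restrictTotalDegree _ hq

def fockOp : V →ₗ[𝕂] Module.End 𝕂 (MvPolynomial σ 𝕂) :=
  LinearMap.mk₂ 𝕂 (fun v q => linearPoly b v * q + fockDeriv b c v q)
    (fun v w q => by simp only [map_add, add_mul, Derivation.coe_add, Pi.add_apply]; abel)
    (fun r v q => by simp [smul_add])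
    (fun v p q => by simp only [map_add, mul_add]; abel)
    (fun r v q => by simp [smul_add])

theorem fockOp_apply (v : V) (q : MvPolynomial σ 𝕂) :
    fockOp b c v q = linearPoly b v * q + fockDeriv b c v q := rfl

theorem fockOp_commutator (x y : V) :
    fockOp b c x * fockOp b c y - fockOp b c y * fockOp b c x =
      algebraMap 𝕂 (Module.End 𝕂 (MvPolynomial σ 𝕂)) (c x y - c y x) := by
  refine LinearMap.ext fun q => ?_
  simp only [LinearMap.sub_apply, Module.End.mul_apply, Module.algebraMap_end_apply, fockOp_apply,
    map_add, Derivation.leibniz, smul_eq_mul, fockDeriv_linearPoly, fockDeriv_comm b c x y,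
    map_sub, ← C_mul']
  ring

theorem fockOp_mem_restrictTotalDegree (v : V) {n : ℕ} {q : MvPolynomial σ 𝕂}
    (hq : q ∈ restrictTotalDegree σ 𝕂 n) : fockOp b c v q ∈ restrictTotalDegree σ 𝕂 (n + 1) := by
  refine add_mem ?_ (restrictTotalDegree_mono n.le_succ ?_)
  · simpa [add_comm] using mul_mem_restrictTotalDegree (linearPoly_mem_restrictTotalDegree b v) hq
  · exact fockDeriv_mem_restrictTotalDegree b c v (restrictTotalDegree_mono n.le_succ hq)

theorem list_prod_fockOp_one_mem (l : List V) :
    (l.map (fockOp b c)).prod 1 ∈ restrictTotalDegree σ 𝕂 l.length := by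
  induction l with
  | nil => simp [mem_restrictTotalDegree]
  | cons v t ih =>
    rw [List.map_cons, List.prod_cons, Module.End.mul_apply]
    exact fockOp_mem_restrictTotalDegree b c v ih

theorem list_prod_fockOp_one_sub_mem : ∀ l : List V,
    (l.map (fockOp b c)).prod 1 - (l.map (linearPoly b)).prod ∈
      restrictTotalDegree σ 𝕂 (l.length - 1)
  | [] => by simp
  | [v] => by simp [fockOp_apply]
  | v :: w :: t => by
    set P := ((w :: t).map (fockOp b c)).prod 1
    set Q := ((w :: t).map (linearPoly b)).prod
    have hP := list_prod_fockOp_one_mem b c (w :: t)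
    have hPQ := list_prod_fockOp_one_sub_mem (w :: t)
    have split :
        fockOp b c v P - linearPoly b v * Q = linearPoly b v * (P - Q) + fockDeriv b c v P := by
      rw [fockOp_apply]; ring
    change fockOp b c v P - linearPoly b v * Q ∈ restrictTotalDegree σ 𝕂 (w :: t).length
    rw [split]
    refine add_mem ?_ ?_
    · exact restrictTotalDegree_mono (by simp [add_comm])
        (mul_mem_restrictTotalDegree (linearPoly_mem_restrictTotalDegree b v) hPQ)
    · exact restrictTotalDegree_mono (Nat.le_succ _) (fockDeriv_mem_restrictTotalDegree b c v hP)

theorem homogeneousComponent_list_prod_fockOp_one (l : List V) :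
    homogeneousComponent l.length ((l.map (fockOp b c)).prod 1) = (l.map (linearPoly b)).prod := by
  rw [← sub_add_cancel ((l.map (fockOp b c)).prod 1) (l.map (linearPoly b)).prod, map_add,
    homogeneousComponent_of_mem (list_prod_linearPoly_mem_homogeneousSubmodule b l), if_pos rfl,
    add_eq_right]
  rcases l with _ | ⟨v, t⟩
  · simp
  · exact homogeneousComponent_eq_zero_of_mem_restrictTotalDegree
      (list_prod_fockOp_one_sub_mem b c _) (by simp)

end FockOperators

section FockRepresentation

variable {c : V →ₗ[𝕂] V →ₗ[𝕂] 𝕂} (hc : ∀ x y, c x y - c y x = ω x y)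
include hc

def fockRep : Weyl 𝕂 V ω →ₐ[𝕂] Module.End 𝕂 (MvPolynomial σ 𝕂) :=
  RingQuot.liftAlgHom 𝕂 ⟨TensorAlgebra.lift 𝕂 (fockOp b c), by
    rintro _ _ ⟨x, y, rfl, rfl⟩
    simp only [map_sub, map_mul, TensorAlgebra.lift_ι_apply, AlgHom.commutes]
    rw [fockOp_commutator, hc]⟩

theorem fockRep_ιW (v : V) : fockRep b hc (ιW 𝕂 V ω v) = fockOp b c v := by
  rw [ιW, LinearMap.comp_apply, AlgHom.toLinearMap_apply, fockRep,
    RingQuot.liftAlgHom_mkAlgHom_apply, TensorAlgebra.lift_ι_apply]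

def symbol : Weyl 𝕂 V ω →ₗ[𝕂] MvPolynomial σ 𝕂 :=
  LinearMap.applyₗ 1 ∘ₗ (fockRep b hc).toLinearMap

theorem symbol_list_prod (l : List V) :
    symbol b hc (l.map (ιW 𝕂 V ω)).prod = (l.map (fockOp b c)).prod 1 := by
  simp [symbol, map_list_prod, Function.comp_def, fockRep_ιW]

theorem symbol_mem_of_mem_FW {p : ℕ} {u : Weyl 𝕂 V ω} (hu : u ∈ FW 𝕂 V ω p) :
    symbol b hc u ∈ restrictTotalDegree σ 𝕂 p := by
  refine (Submodule.span_le (p := (restrictTotalDegree σ 𝕂 p).comap (symbol b hc))).mpr ?_ hu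
  rintro _ ⟨l, hl, rfl⟩
  rw [SetLike.mem_coe, Submodule.mem_comap, symbol_list_prod]
  exact restrictTotalDegree_mono hl (list_prod_fockOp_one_mem b c l)

theorem homogeneousComponent_symbol_of_mem_FWprev {p : ℕ} {u : Weyl 𝕂 V ω}
    (hu : u ∈ FWprev 𝕂 V ω p) : homogeneousComponent p (symbol b hc u) = 0 := by
  cases p with
  | zero => rw [(Submodule.mem_bot 𝕂).mp hu, map_zero, map_zero]
  | succ p =>
    exact homogeneousComponent_eq_zero_of_mem_restrictTotalDegree (symbol_mem_of_mem_FW b hc hu)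
      (lt_add_one p)

end FockRepresentation

section NormalOrdering

variable (ω) in
/-- The factors are taken in the arbitrary order chosen by `Multiset.toList`: by
`list_prod_ιW_sub_mem_FWprev_of_perm` any other order only changes the product in lower
filtration degree. -/
def orderedMonomial (m : σ →₀ ℕ) : Weyl 𝕂 V ω :=
  (((Finsupp.toMultiset m).toList.map b).map (ιW 𝕂 V ω)).prod

variable (ω) in
def normalOrder : MvPolynomial σ 𝕂 →ₗ[𝕂] Weyl 𝕂 V ω :=
  (basisMonomials σ 𝕂).constr 𝕂 (orderedMonomial ω b)

theorem normalOrder_monomial (m : σ →₀ ℕ) :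
    normalOrder ω b (monomial m 1) = orderedMonomial ω b m := by
  simpa [normalOrder] using (basisMonomials σ 𝕂).constr_basis 𝕂 (orderedMonomial ω b) m

theorem normalOrder_one : normalOrder ω b 1 = 1 := by
  simpa [orderedMonomial] using normalOrder_monomial (ω := ω) b 0

theorem orderedMonomial_mem_FW (m : σ →₀ ℕ) : orderedMonomial ω b m ∈ FW 𝕂 V ω m.degree := by
  have := list_prod_mem_FW (ω := ω) ((Finsupp.toMultiset m).toList.map b)
  rwa [List.length_map, Finsupp.length_toList_toMultiset] at this

theorem normalOrder_mem_FW {d : ℕ} {q : MvPolynomial σ 𝕂}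
    (hq : q ∈ restrictTotalDegree σ 𝕂 d) : normalOrder ω b q ∈ FW 𝕂 V ω d := by
  refine (restrictTotalDegree_le_iff (P := (FW 𝕂 V ω d).comap (normalOrder ω b))).mpr
    (fun m hm => ?_) hq
  rw [Submodule.mem_comap, normalOrder_monomial]
  exact FW_mono hm (orderedMonomial_mem_FW b m)

theorem orderedMonomial_add_single_sub_mem (m : σ →₀ ℕ) (i : σ) :
    orderedMonomial ω b (m + Finsupp.single i 1) - ιW 𝕂 V ω (b i) * orderedMonomial ω b m ∈
      FW 𝕂 V ω m.degree := by
  have := list_prod_ιW_sub_mem_FWprev_of_perm (ω := ω)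
    ((Finsupp.toList_toMultiset_add_single_perm m i).map b)
  rwa [List.length_map, Finsupp.length_toList_toMultiset, map_add, Finsupp.degree_single,
    List.map_cons, List.map_cons, List.prod_cons] at this

theorem normalOrder_linearPoly_mul_monomial_sub_mem (m : σ →₀ ℕ) (v : V) :
    normalOrder ω b (linearPoly b v * monomial m 1) - ιW 𝕂 V ω v * orderedMonomial ω b m ∈
      FW 𝕂 V ω m.degree := by
  let f : V →ₗ[𝕂] Weyl 𝕂 V ω :=
    normalOrder ω b ∘ₗ LinearMap.mulRight 𝕂 (monomial m 1) ∘ₗ linearPoly b -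
      LinearMap.mulRight 𝕂 (orderedMonomial ω b m) ∘ₗ ιW 𝕂 V ω
  have : (FW 𝕂 V ω m.degree).comap f = ⊤ :=
    (Submodule.eq_top_iff_forall_basis_mem b).mpr fun i => by
      simpa [f, X, monomial_mul, add_comm, normalOrder_monomial] using
        orderedMonomial_add_single_sub_mem b m i
  exact this.ge trivial

theorem normalOrder_linearPoly_mul_sub_mem (v : V) {d : ℕ} {q : MvPolynomial σ 𝕂}
    (hq : q ∈ restrictTotalDegree σ 𝕂 d) :
    normalOrder ω b (linearPoly b v * q) - ιW 𝕂 V ω v * normalOrder ω b q ∈ FW 𝕂 V ω d := by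
  let g : MvPolynomial σ 𝕂 →ₗ[𝕂] Weyl 𝕂 V ω :=
    normalOrder ω b ∘ₗ LinearMap.mulLeft 𝕂 (linearPoly b v) -
      LinearMap.mulLeft 𝕂 (ιW 𝕂 V ω v) ∘ₗ normalOrder ω b
  refine (restrictTotalDegree_le_iff (P := (FW 𝕂 V ω d).comap g)).mpr (fun m hm => ?_) hq
  simpa [g, normalOrder_monomial] using
    FW_mono hm (normalOrder_linearPoly_mul_monomial_sub_mem b m v)

theorem normalOrder_list_prod_linearPoly_sub_mem (l : List V) :
    normalOrder ω b (l.map (linearPoly b)).prod - (l.map (ιW 𝕂 V ω)).prod ∈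
      FWprev 𝕂 V ω l.length := by
  induction l with
  | nil => simp [normalOrder_one]
  | cons v t ih =>
    set Q := (t.map (linearPoly b)).prod
    set W := (t.map (ιW 𝕂 V ω)).prod
    have hQ := homogeneousSubmodule_le_restrictTotalDegree _
      (list_prod_linearPoly_mem_homogeneousSubmodule b t)
    have split : normalOrder ω b (linearPoly b v * Q) - ιW 𝕂 V ω v * W =
        (normalOrder ω b (linearPoly b v * Q) - ιW 𝕂 V ω v * normalOrder ω b Q) +
          ιW 𝕂 V ω v * (normalOrder ω b Q - W) := by
      rw [mul_sub]; abel
    change _ ∈ FW 𝕂 V ω t.length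
    rw [List.map_cons, List.prod_cons, List.map_cons, List.prod_cons, split]
    exact add_mem (normalOrder_linearPoly_mul_sub_mem b v hQ) (ιW_mul_mem_FW_of_mem_FWprev v ih)

end NormalOrdering

section GradedMap

variable (p : ℕ)

variable (ω) in
def symToGr : SymGr 𝕂 V p →ₗ[𝕂] GrW 𝕂 V ω p :=
  @Submodule.mkQ _ _ _ (Submodule.addCommGroup _) _
    ((FWprev 𝕂 V ω p).comap (FW 𝕂 V ω p).subtype) ∘ₗ
    LinearMap.codRestrict (FW 𝕂 V ω p)
      (normalOrder ω b ∘ₗ (symToPoly b).toLinearMap ∘ₗ (SymGr 𝕂 V p).subtype)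
      fun s => normalOrder_mem_FW b (homogeneousSubmodule_le_restrictTotalDegree p
        (symToPoly_mem_homogeneousSubmodule b s.2))

variable {p}

theorem symToGr_list_prod (l : List V) (hl : l.length = p)
    (h₁ : (l.map (ιS 𝕂 V)).prod ∈ SymGr 𝕂 V p) (h₂ : (l.map (ιW 𝕂 V ω)).prod ∈ FW 𝕂 V ω p) :
    symToGr ω b p ⟨(l.map (ιS 𝕂 V)).prod, h₁⟩ =
      Submodule.Quotient.mk ⟨(l.map (ιW 𝕂 V ω)).prod, h₂⟩ := by
  rw [symToGr, LinearMap.comp_apply, Submodule.mkQ_apply, Submodule.Quotient.eq]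
  change normalOrder ω b (symToPoly b (l.map (ιS 𝕂 V)).prod) - (l.map (ιW 𝕂 V ω)).prod ∈
    FWprev 𝕂 V ω p
  rw [symToPoly_list_prod, ← hl]
  exact normalOrder_list_prod_linearPoly_sub_mem b l

theorem symToGr_surjective : Function.Surjective (symToGr ω b p) := by
  have htop : Submodule.span 𝕂 (((↑) : FW 𝕂 V ω p → Weyl 𝕂 V ω) ⁻¹'
      {w | ∃ l : List V, l.length ≤ p ∧ w = (l.map (ιW 𝕂 V ω)).prod}) = ⊤ :=
    Submodule.span_span_coe_preimage
  rw [← LinearMap.range_eq_top, eq_top_iff, ← Submodule.range_mkQ, LinearMap.range_eq_map, ← htop,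
    Submodule.map_span, Submodule.span_le]
  rintro _ ⟨⟨_, h⟩, ⟨l, hl, rfl⟩, rfl⟩
  rcases hl.eq_or_lt with hl | hl
  · exact ⟨⟨_, Submodule.subset_span ⟨l, hl, rfl⟩⟩, symToGr_list_prod b l hl _ _⟩
  · have hzero : (Submodule.Quotient.mk ⟨_, h⟩ : GrW 𝕂 V ω p) = 0 :=
      (Submodule.Quotient.mk_eq_zero _).mpr (list_prod_mem_FWprev hl)
    rw [SetLike.mem_coe, Submodule.mkQ_apply, hzero]
    exact zero_mem _

variable {c : V →ₗ[𝕂] V →ₗ[𝕂] 𝕂} (hc : ∀ x y, c x y - c y x = ω x y)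
include hc

def grSymbol : GrW 𝕂 V ω p →ₗ[𝕂] MvPolynomial σ 𝕂 :=
  @Submodule.liftQ _ _ _ (Submodule.addCommGroup _) _
    ((FWprev 𝕂 V ω p).comap (FW 𝕂 V ω p).subtype) _ _ _ _ _ _
    (homogeneousComponent p ∘ₗ symbol b hc ∘ₗ (FW 𝕂 V ω p).subtype)
    fun _ hu => homogeneousComponent_symbol_of_mem_FWprev b hc hu

theorem grSymbol_mk {u : Weyl 𝕂 V ω} (hu : u ∈ FW 𝕂 V ω p) :
    grSymbol b hc (Submodule.Quotient.mk ⟨u, hu⟩) = homogeneousComponent p (symbol b hc u) :=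
  rfl

theorem grSymbol_comp_symToGr :
    grSymbol b hc ∘ₗ symToGr ω b p = (symToPoly b).toLinearMap ∘ₗ (SymGr 𝕂 V p).subtype := by
  refine LinearMap.ext_on Submodule.span_span_coe_preimage ?_
  rintro ⟨_, h⟩ ⟨l, rfl, rfl⟩
  rw [LinearMap.comp_apply, symToGr_list_prod b l rfl h (list_prod_mem_FW l), grSymbol_mk,
    symbol_list_prod, homogeneousComponent_list_prod_fockOp_one, LinearMap.comp_apply,
    Submodule.subtype_apply, AlgHom.toLinearMap_apply, symToPoly_list_prod]

theorem symToGr_injective : Function.Injective (symToGr ω b p) := by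
  refine Function.Injective.of_comp (f := grSymbol b hc) ?_
  rw [← LinearMap.coe_comp, grSymbol_comp_symToGr]
  exact (symToPoly_injective b).comp Subtype.val_injective

end GradedMap

end

theorem stmt3 (halt : ∀ x, ω x x = 0) :
    ∀ p : ℕ, ∃ φ : ↥(SymGr 𝕂 V p) →ₗ[𝕂] GrW 𝕂 V ω p,
      (∀ (l : List V) (hl : l.length = p),
        φ ⟨(l.map (ιS 𝕂 V)).prod, Submodule.subset_span ⟨l, hl, rfl⟩⟩ =
          Submodule.Quotient.mk
            ⟨(l.map (ιW 𝕂 V ω)).prod, Submodule.subset_span ⟨l, hl.le, rfl⟩⟩) ∧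
      Function.Bijective φ := by
  intro p
  have hc (x y : V) : ((2⁻¹ : 𝕂) • ω) x y - ((2⁻¹ : 𝕂) • ω) y x = ω x y := by
    have := LinearMap.IsAlt.neg halt x y
    simp only [LinearMap.smul_apply, smul_eq_mul, ← this]
    field_simp
    ring
  let b := Module.Basis.ofVectorSpace 𝕂 V
  exact ⟨symToGr ω b p, fun l hl => symToGr_list_prod b l hl _ _,
    symToGr_injective b hc, symToGr_surjective b⟩
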